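/- Fix an integer n ≥ 2 and constants a₁,…,aₙ ∈ ℂ. Let ψ : Ω → ℂ be smooth with Hψ = 0 on Ω and suppose ψ is an eigenfunction of the dilation operator, Dψ = λψ on Ω for some λ ∈ ℂ. Then ψ satisfies the Helmholtz-type equation of the generic superintegrable system on the (n−1)-sphere: Σ_{1 ≤ j < k ≤ n} J_{jk} ψ = ( ((n−2)/2)² − λ² − Σⱼ₌₁ⁿ aⱼ ) ψ on Ω. -/

import Mathlib

noncomputable section

/-- The domain `Ω = {x ∈ ℝⁿ : x ≠ 0 and xⱼ ≠ 0 for all j}`. -/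
def Omega (n : ℕ) : Set (Fin n → ℝ) := {x | x ≠ 0 ∧ ∀ j, x j ≠ 0}

/-- Partial derivative `∂ⱼ f`. -/
def pd {n : ℕ} (j : Fin n) (f : (Fin n → ℝ) → ℂ) (x : Fin n → ℝ) : ℂ :=
  fderiv ℝ f x (Pi.single j 1)

/-- `r² = Σⱼ xⱼ²`. -/
def r2 {n : ℕ} (x : Fin n → ℝ) : ℝ := ∑ j, (x j) ^ 2

/-- The Euler operator `E = Σⱼ xⱼ ∂ⱼ`. -/
def Eop {n : ℕ} (f : (Fin n → ℝ) → ℂ) (x : Fin n → ℝ) : ℂ :=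
  ∑ j, (x j : ℂ) * pd j f x

/-- The Hamiltonian `Hf = Σⱼ (∂ⱼ²f + (aⱼ/xⱼ²) f)`. -/
def Hop {n : ℕ} (a : Fin n → ℂ) (f : (Fin n → ℝ) → ℂ) (x : Fin n → ℝ) : ℂ :=
  ∑ j, (pd j (pd j f) x + (a j / (x j : ℂ) ^ 2) * f x)

/-- The dilation operator `Df = −Ef − ((n−2)/2) f`. -/
def Dop {n : ℕ} (f : (Fin n → ℝ) → ℂ) (x : Fin n → ℝ) : ℂ :=
  -Eop f x - (((n : ℂ) - 2) / 2) * f x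

/-- `Pⱼf = ∂ⱼ²f + (aⱼ/xⱼ²) f`. -/
def Pop {n : ℕ} (a : Fin n → ℂ) (j : Fin n) (f : (Fin n → ℝ) → ℂ)
    (x : Fin n → ℝ) : ℂ :=
  pd j (pd j f) x + (a j / (x j : ℂ) ^ 2) * f x

/-- The rotation `xⱼ∂ₖ − xₖ∂ⱼ`. -/
def rot {n : ℕ} (j k : Fin n) (f : (Fin n → ℝ) → ℂ) (x : Fin n → ℝ) : ℂ :=
  (x j : ℂ) * pd k f x - (x k : ℂ) * pd j f x

/-- `J_{jk}f = (xⱼ∂ₖ − xₖ∂ⱼ)²f + (aⱼxₖ²/xⱼ² + aₖxⱼ²/xₖ²) f`. -/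
def Jop {n : ℕ} (a : Fin n → ℂ) (j k : Fin n) (f : (Fin n → ℝ) → ℂ)
    (x : Fin n → ℝ) : ℂ :=
  rot j k (rot j k f) x
    + (a j * (x k : ℂ) ^ 2 / (x j : ℂ) ^ 2
        + a k * (x j : ℂ) ^ 2 / (x k : ℂ) ^ 2) * f x

/-- `Mⱼf = (n−2)xⱼ f − r² ∂ⱼf + 2xⱼ Ef`. -/
def Mop {n : ℕ} (j : Fin n) (f : (Fin n → ℝ) → ℂ) (x : Fin n → ℝ) : ℂ :=
  ((n : ℂ) - 2) * (x j : ℂ) * f x - (r2 x : ℂ) * pd j f x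
    + 2 * (x j : ℂ) * Eop f x

/-- `Kⱼf = Mⱼ(Mⱼf) + (aⱼ r⁴/xⱼ²) f`. -/
def Kop {n : ℕ} (a : Fin n → ℂ) (j : Fin n) (f : (Fin n → ℝ) → ℂ)
    (x : Fin n → ℝ) : ℂ :=
  Mop j (Mop j f) x + (a j * (r2 x : ℂ) ^ 2 / (x j : ℂ) ^ 2) * f x

/-- The inversion (Kelvin-type) operator `(Iψ)(x) = r^{2−n} ψ(x/r²)`,
with `r^{2−n} = (r²)^{(2−n)/2}`. -/
def Iop {n : ℕ} (f : (Fin n → ℝ) → ℂ) (x : Fin n → ℝ) : ℂ :=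
  (((r2 x) ^ (((2 : ℝ) - (n : ℝ)) / 2) : ℝ) : ℂ) * f ((r2 x)⁻¹ • x)

/-! ### Auxiliary lemmas -/

lemma isOpen_Omega (n : ℕ) : IsOpen (Omega n) := by
  have h : Omega n = {x : Fin n → ℝ | x ≠ 0} ∩ ⋂ j, {x | x j ≠ 0} := by
    ext x; simp [Omega, Set.mem_iInter]
  rw [h]
  exact isOpen_ne.inter (isOpen_iInter_of_finite fun j =>
    isOpen_ne.preimage (continuous_apply j))

/-- coordinate as CLM -/
def cL {n : ℕ} (j : Fin n) : (Fin n → ℝ) →L[ℝ] ℂ :=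
  Complex.ofRealCLM.comp (ContinuousLinearMap.proj j)

lemma cL_apply {n : ℕ} (j : Fin n) (y : Fin n → ℝ) : cL j y = ((y j : ℝ) : ℂ) := rfl

lemma pd_congr_nhds {n : ℕ} {f g : (Fin n → ℝ) → ℂ} {x} (h : f =ᶠ[nhds x] g) (j : Fin n) :
    pd j f x = pd j g x := by
  unfold pd; rw [h.fderiv_eq]

lemma pd_const_mul {n : ℕ} {f : (Fin n → ℝ) → ℂ} {x} (hf : DifferentiableAt ℝ f x)
    (c : ℂ) (m : Fin n) :
    pd m (fun y => c * f y) x = c * pd m f x := by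
  unfold pd; rw [fderiv_const_mul hf]; simp

lemma pd_coord_mul {n : ℕ} {f : (Fin n → ℝ) → ℂ} {x} (hf : DifferentiableAt ℝ f x) (m j : Fin n) :
    pd m (fun y => ((y j : ℝ) : ℂ) * f y) x
      = (((Pi.single m (1:ℝ) : Fin n → ℝ) j : ℝ) : ℂ) * f x + (x j : ℂ) * pd m f x := by
  have hc : DifferentiableAt ℝ (fun y : Fin n → ℝ => ((y j : ℝ) : ℂ)) x :=
    (cL j).differentiableAt
  unfold pd
  rw [fderiv_fun_mul hc hf]
  have h2 : fderiv ℝ (fun y : Fin n → ℝ => ((y j : ℝ) : ℂ)) x = cL j := (cL j).fderiv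
  simp [h2, cL_apply, smul_eq_mul]
  ring

lemma contDiffAt_pd {n : ℕ} {ψ : (Fin n → ℝ) → ℂ} {x} (h : ContDiffAt ℝ (⊤ : ℕ∞) ψ x) (k : Fin n) :
    ContDiffAt ℝ (⊤ : ℕ∞) (pd k ψ) x := by
  have hF : ContDiffAt ℝ (⊤ : ℕ∞) (fderiv ℝ ψ) x := h.fderiv_right (by simp)
  exact hF.clm_apply contDiffAt_const

lemma sum_pairs {n : ℕ} (A : Fin n → Fin n → ℂ) :
    ∑ j : Fin n, ∑ k ∈ Finset.univ.filter (fun k => j < k), (A j k + A k j)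
      = ∑ j : Fin n, ∑ k ∈ Finset.univ.filter (fun k => k ≠ j), A j k := by
  simp only [Finset.sum_filter]
  have h1 : ∀ j k : Fin n, (if j < k then A j k + A k j else 0)
      = (if j < k then A j k else 0) + (if j < k then A k j else 0) := by
    intro j k; split <;> simp
  simp only [h1, Finset.sum_add_distrib]
  rw [show (∑ x : Fin n, ∑ y : Fin n, if x < y then A y x else 0)
      = ∑ y : Fin n, ∑ x : Fin n, if x < y then A y x else 0 from Finset.sum_comm]
  rw [← Finset.sum_add_distrib]
  refine Finset.sum_congr rfl fun j _ => ?_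
  rw [← Finset.sum_add_distrib]
  refine Finset.sum_congr rfl fun k _ => ?_
  rcases lt_trichotomy j k with h|h|h
  · simp [h, not_lt.mpr h.le, h.ne']
  · simp [h]
  · simp [h, not_lt.mpr h.le, h.ne]

/-- If `Hψ = 0` and `Dψ = λψ` on Ω, then ψ satisfies the Helmholtz-type equation
of the generic superintegrable system on the (n−1)-sphere:
`Σ_{j<k} J_{jk} ψ = (((n−2)/2)² − λ² − Σⱼ aⱼ) ψ`. -/

theorem dilation_eigenfunction_sphere_helmholtz
    (n : ℕ) (hn : 2 ≤ n) (a : Fin n → ℂ) (lam : ℂ)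
    (ψ : (Fin n → ℝ) → ℂ) (hψ : ContDiffOn ℝ (⊤ : ℕ∞) ψ (Omega n))
    (hH : ∀ x ∈ Omega n, Hop a ψ x = 0)
    (hD : ∀ x ∈ Omega n, Dop ψ x = lam * ψ x) :
    ∀ x ∈ Omega n,
      (∑ j : Fin n, ∑ k ∈ Finset.univ.filter (fun k => j < k), Jop a j k ψ x)
        = ((((n : ℂ) - 2) / 2) ^ 2 - lam ^ 2 - ∑ j : Fin n, a j) * ψ x := by
  intro x hx
  have hU : IsOpen (Omega n) := isOpen_Omega n
  have hmem : Omega n ∈ nhds x := hU.mem_nhds hx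
  have hψx : ContDiffAt ℝ (⊤ : ℕ∞) ψ x := hψ.contDiffAt hmem
  have hd : DifferentiableAt ℝ ψ x := hψx.differentiableAt (by simp)
  have hdp : ∀ k : Fin n, DifferentiableAt ℝ (pd k ψ) x :=
    fun k => (contDiffAt_pd hψx k).differentiableAt (by simp)
  set μ : ℂ := -lam - ((n:ℂ)-2)/2 with hμ
  have hR : (r2 x : ℂ) = ∑ k, (x k : ℂ)^2 := by
    unfold r2; push_cast; rfl
  -- eigenvalue equation on a neighborhood
  have hev : Eop ψ =ᶠ[nhds x] fun y => μ * ψ y := by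
    filter_upwards [hmem] with y hy
    have h := hD y hy
    simp only [Dop] at h
    rw [hμ]; linear_combination -h
  have hE : Eop ψ x = μ * ψ x := hev.self_of_nhds
  have hE' : ∑ j, (x j : ℂ) * pd j ψ x = μ * ψ x := hE
  -- derivative of Eop ψ, two ways
  have hpdE1 : ∀ m, pd m (Eop ψ) x = μ * pd m ψ x := by
    intro m
    rw [pd_congr_nhds hev m, pd_const_mul hd]
  have hpdE2 : ∀ m, pd m (Eop ψ) x = pd m ψ x + ∑ j, (x j : ℂ) * pd m (pd j ψ) x := by
    intro m
    have hterm : ∀ j : Fin n, DifferentiableAt ℝ (fun y => ((y j : ℝ) : ℂ) * pd j ψ y) x :=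
      fun j => ((cL j).differentiableAt).mul (hdp j)
    have e1 : pd m (Eop ψ) x = ∑ j, pd m (fun y => ((y j : ℝ) : ℂ) * pd j ψ y) x := by
      show fderiv ℝ (fun y => ∑ j, ((y j : ℝ) : ℂ) * pd j ψ y) x (Pi.single m 1) = _
      rw [fderiv_fun_sum (fun j _ => hterm j)]
      simp [pd]
    rw [e1]
    have e2 : ∀ j : Fin n, pd m (fun y => ((y j : ℝ) : ℂ) * pd j ψ y) x
        = (((Pi.single m (1:ℝ) : Fin n → ℝ) j : ℝ) : ℂ) * pd j ψ x
          + (x j : ℂ) * pd m (pd j ψ) x :=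
      fun j => pd_coord_mul (hdp j) m j
    simp only [e2]
    rw [Finset.sum_add_distrib]
    congr 1
    rw [Finset.sum_eq_single m]
    · simp
    · intro b _ hb; simp [Pi.single_eq_of_ne hb]
    · intro h; exact absurd (Finset.mem_univ m) h
  have hQ2 : ∑ m, ∑ j, (x m : ℂ) * ((x j : ℂ) * pd m (pd j ψ) x)
      = μ^2 * ψ x - μ * ψ x := by
    have h1 : ∑ m, (x m : ℂ) * pd m (Eop ψ) x = μ * (μ * ψ x) := by
      calc ∑ m, (x m : ℂ) * pd m (Eop ψ) x
          = ∑ m, μ * ((x m : ℂ) * pd m ψ x) := by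
            refine Finset.sum_congr rfl fun m _ => ?_; rw [hpdE1 m]; ring
        _ = μ * ∑ m, (x m : ℂ) * pd m ψ x := by rw [Finset.mul_sum]
        _ = μ * (μ * ψ x) := by rw [hE']
    have h2 : ∑ m, (x m : ℂ) * pd m (Eop ψ) x
        = μ * ψ x + ∑ m, ∑ j, (x m : ℂ) * ((x j : ℂ) * pd m (pd j ψ) x) := by
      calc ∑ m, (x m : ℂ) * pd m (Eop ψ) x
          = ∑ m, ((x m : ℂ) * pd m ψ x
              + ∑ j, (x m : ℂ) * ((x j : ℂ) * pd m (pd j ψ) x)) := by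
            refine Finset.sum_congr rfl fun m _ => ?_
            rw [hpdE2 m, mul_add, Finset.mul_sum]
        _ = (∑ m, (x m : ℂ) * pd m ψ x)
              + ∑ m, ∑ j, (x m : ℂ) * ((x j : ℂ) * pd m (pd j ψ) x) := by
            rw [Finset.sum_add_distrib]
        _ = μ * ψ x + ∑ m, ∑ j, (x m : ℂ) * ((x j : ℂ) * pd m (pd j ψ) x) := by rw [hE']
    have h3 := h1.symm.trans h2
    linear_combination -h3
  -- Laplacian from H
  have hT : ∑ k, pd k (pd k ψ) x = -(∑ j, a j / (x j : ℂ)^2) * ψ x := by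
    have h := hH x hx
    simp only [Hop] at h
    rw [Finset.sum_add_distrib] at h
    have h2 : ∑ j, (a j / (x j : ℂ)^2) * ψ x = (∑ j, a j / (x j : ℂ)^2) * ψ x :=
      (Finset.sum_mul _ _ _).symm
    rw [h2] at h
    linear_combination h
  -- expansion of rot²
  have hrot : ∀ j k : Fin n, j ≠ k → rot j k (rot j k ψ) x
      = (x j : ℂ)^2 * pd k (pd k ψ) x + (x k : ℂ)^2 * pd j (pd j ψ) x
        - (x j : ℂ) * pd j ψ x - (x k : ℂ) * pd k ψ x
        - ((x j : ℂ) * ((x k : ℂ) * pd j (pd k ψ) x)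
            + (x k : ℂ) * ((x j : ℂ) * pd k (pd j ψ) x)) := by
    intro j k hjk
    have hjk' : k ≠ j := hjk.symm
    have h1 : DifferentiableAt ℝ (fun y : Fin n → ℝ => ((y j : ℝ) : ℂ) * pd k ψ y) x :=
      ((cL j).differentiableAt).mul (hdp k)
    have h2 : DifferentiableAt ℝ (fun y : Fin n → ℝ => ((y k : ℝ) : ℂ) * pd j ψ y) x :=
      ((cL k).differentiableAt).mul (hdp j)
    have hpdrot : ∀ m : Fin n, pd m (rot j k ψ) x =
        ((((Pi.single m (1:ℝ) : Fin n → ℝ) j : ℝ) : ℂ) * pd k ψ x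
            + (x j : ℂ) * pd m (pd k ψ) x)
          - ((((Pi.single m (1:ℝ) : Fin n → ℝ) k : ℝ) : ℂ) * pd j ψ x
            + (x k : ℂ) * pd m (pd j ψ) x) := by
      intro m
      have e1 : pd m (rot j k ψ) x
          = pd m (fun y => ((y j : ℝ) : ℂ) * pd k ψ y) x
            - pd m (fun y => ((y k : ℝ) : ℂ) * pd j ψ y) x := by
        show fderiv ℝ (fun y => ((y j : ℝ) : ℂ) * pd k ψ y
            - ((y k : ℝ) : ℂ) * pd j ψ y) x (Pi.single m 1) = _
        rw [fderiv_fun_sub h1 h2]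
        simp [pd]
      rw [e1, pd_coord_mul (hdp k) m j, pd_coord_mul (hdp j) m k]
    show (x j : ℂ) * pd k (rot j k ψ) x - (x k : ℂ) * pd j (rot j k ψ) x = _
    rw [hpdrot k, hpdrot j, Pi.single_eq_same, Pi.single_eq_same,
      Pi.single_eq_of_ne hjk, Pi.single_eq_of_ne hjk']
    push_cast
    ring
  -- the symmetric summand
  set A : Fin n → Fin n → ℂ := fun j k =>
    (x j : ℂ)^2 * pd k (pd k ψ) x - (x j : ℂ) * pd j ψ x
      - (x j : ℂ) * ((x k : ℂ) * pd j (pd k ψ) x)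
      + a j * (x k : ℂ)^2 / (x j : ℂ)^2 * ψ x with hA
  have hJ : ∀ j k : Fin n, j < k → Jop a j k ψ x = A j k + A k j := by
    intro j k h
    rw [Jop, hrot j k h.ne]
    simp only [hA]
    ring
  have step1 : (∑ j : Fin n, ∑ k ∈ Finset.univ.filter (fun k => j < k), Jop a j k ψ x)
      = ∑ j : Fin n, ∑ k ∈ Finset.univ.filter (fun k => k ≠ j), A j k := by
    rw [← sum_pairs A]
    refine Finset.sum_congr rfl fun j _ => Finset.sum_congr rfl fun k hk => ?_
    exact hJ j k (by simpa using hk)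
  have step2 : ∀ j : Fin n, ∑ k ∈ Finset.univ.filter (fun k => k ≠ j), A j k
      = (∑ k, A j k) - A j j := by
    intro j
    rw [Finset.filter_ne', Finset.sum_erase_eq_sub (Finset.mem_univ j)]
  rw [step1]
  simp only [step2]
  rw [Finset.sum_sub_distrib]
  -- diagonal
  have diag : ∑ j, A j j = -(μ * ψ x) + (∑ j, a j) * ψ x := by
    have e : ∀ j : Fin n, A j j = -((x j : ℂ) * pd j ψ x) + a j * ψ x := by
      intro j
      have hxj : (x j : ℂ) ≠ 0 := by
        exact_mod_cast Complex.ofReal_ne_zero.mpr (hx.2 j)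
      simp only [hA]
      field_simp
      ring
    simp only [e]
    rw [Finset.sum_add_distrib, Finset.sum_neg_distrib]
    rw [hE', Finset.sum_mul]
  -- full double sum
  have inner : ∀ j : Fin n, ∑ k, A j k
      = (x j : ℂ)^2 * (∑ k, pd k (pd k ψ) x)
        + (-((n : ℂ) * ((x j : ℂ) * pd j ψ x))
        + (-(∑ k, (x j : ℂ) * ((x k : ℂ) * pd j (pd k ψ) x))
        + a j * (r2 x : ℂ) / (x j : ℂ)^2 * ψ x)) := by
    intro j
    have e : ∀ k : Fin n, A j k
        = (x j : ℂ)^2 * pd k (pd k ψ) x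
          + (-((x j : ℂ) * pd j ψ x)
          + (-((x j : ℂ) * ((x k : ℂ) * pd j (pd k ψ) x))
          + a j / (x j : ℂ)^2 * ψ x * (x k : ℂ)^2)) := by
      intro k; simp only [hA]; ring
    simp only [e, Finset.sum_add_distrib]
    congr 1
    · rw [← Finset.mul_sum]
    congr 1
    · rw [Finset.sum_neg_distrib, Finset.sum_const, Finset.card_univ, Fintype.card_fin,
        nsmul_eq_mul]
    congr 1
    · rw [Finset.sum_neg_distrib]
    · rw [← Finset.mul_sum, ← hR]; ring
  simp only [inner]
  rw [Finset.sum_add_distrib, Finset.sum_add_distrib, Finset.sum_add_distrib]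
  rw [← Finset.sum_mul, ← hR, hT]
  rw [Finset.sum_neg_distrib, ← Finset.mul_sum, hE']
  rw [Finset.sum_neg_distrib, hQ2]
  have hpot : ∑ j, a j * (r2 x : ℂ) / (x j : ℂ)^2 * ψ x
      = (r2 x : ℂ) * ((∑ j, a j / (x j : ℂ)^2) * ψ x) := by
    calc ∑ j, a j * (r2 x : ℂ) / (x j : ℂ)^2 * ψ x
        = ∑ j, (r2 x : ℂ) * (a j / (x j : ℂ)^2 * ψ x) :=
          Finset.sum_congr rfl fun j _ => by ring
      _ = (r2 x : ℂ) * ∑ j, a j / (x j : ℂ)^2 * ψ x := (Finset.mul_sum _ _ _).symm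
      _ = (r2 x : ℂ) * ((∑ j, a j / (x j : ℂ)^2) * ψ x) := by rw [Finset.sum_mul]
  rw [hpot, diag, hμ]
  ring
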